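/- Let J, K be positive integers, p = J + K, and let Σ be a real symmetric positive definite p×p matrix, partitioned into blocks Σ₁₁ (J×J), Σ₁₂, Σ₂₁, Σ₂₂ according to the split of {1,…,p} into the first J and last K indices. Let Σ^{1/2} be the positive semidefinite square root of Σ, let M be the p×p block matrix with top-left J×J block Σ₁₁⁻¹ and all other blocks zero, and set A = I − Σ^{1/2} M Σ^{1/2}. Then A is symmetric (Aᵀ = A), idempotent (A² = A), and trace(A) = K. -/

import Mathlib

/-! Multiplying out blocks gives `M Σ = [[I, Σ₁₁⁻¹ Σ₁₂], [0, 0]]`, hence `M Σ M = M`. With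
`S = Σ^{1/2}` symmetric and `S S = Σ`, this makes `S M S` a symmetric idempotent, and so is
`A = I - S M S`; its trace is `p - tr (M Σ) = (J + K) - J = K`. -/

open Matrix

open scoped ComplexOrder in
/-- The positive semidefinite square root of a positive semidefinite matrix, as defined in
Mathlib (December 2024) under this name; the definition has since been removed. -/
noncomputable def Matrix.PosSemidef.sqrt {n 𝕜 : Type*} [Fintype n] [RCLike 𝕜] [DecidableEq n]
    {A : Matrix n n 𝕜} (hA : A.PosSemidef) : Matrix n n 𝕜 :=
  hA.1.eigenvectorUnitary.1 * diagonal ((↑) ∘ (Real.sqrt ∘ hA.1.eigenvalues)) *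
    (star hA.1.eigenvectorUnitary : Matrix n n 𝕜)

namespace Matrix.PosSemidef

open scoped ComplexOrder

variable {n 𝕜 : Type*} [Fintype n] [RCLike 𝕜] [DecidableEq n] {A : Matrix n n 𝕜}

lemma sqrt_mul_self (hA : A.PosSemidef) : hA.sqrt * hA.sqrt = A := by
  have hU : (star hA.1.eigenvectorUnitary : Matrix n n 𝕜) * hA.1.eigenvectorUnitary = 1 :=
    Unitary.coe_star_mul_self _
  conv_rhs => rw [hA.1.spectral_theorem, Unitary.conjStarAlgAut_apply]
  simp only [sqrt, Matrix.mul_assoc]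
  rw [← Matrix.mul_assoc (star (hA.1.eigenvectorUnitary : Matrix n n 𝕜)), hU, Matrix.one_mul,
    ← Matrix.mul_assoc (diagonal _), diagonal_mul_diagonal]
  congr 3
  funext i
  simp only [Function.comp_apply]
  rw [← RCLike.ofReal_mul, Real.mul_self_sqrt (hA.eigenvalues_nonneg i)]

lemma isHermitian_sqrt (hA : A.PosSemidef) : hA.sqrt.IsHermitian := by
  simp only [IsHermitian, sqrt, conjTranspose_mul, Matrix.mul_assoc, diagonal_conjTranspose,
    star_eq_conjTranspose, conjTranspose_conjTranspose]
  congr 3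
  funext i
  simp

end Matrix.PosSemidef

theorem isIdempotentElem_mul_mul_of_mul_mul_eq_self {S : Type*} [Semigroup S] {s m : S}
    (h : m * (s * s) * m = m) : IsIdempotentElem (s * m * s) := by
  calc s * m * s * (s * m * s) = s * (m * (s * s) * m) * s := by simp only [mul_assoc]
    _ = s * m * s := by rw [h]

namespace Matrix

variable {m n R : Type*} [Fintype m] [Fintype n]

theorem trace_fromBlocks [AddCommMonoid R] (A : Matrix m m R) (B : Matrix m n R)
    (C : Matrix n m R) (D : Matrix n n R) :
    (fromBlocks A B C D).trace = A.trace + D.trace := by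
  simp [trace, Fintype.sum_sum_type]

variable [DecidableEq m] [CommRing R] {S : Matrix (m ⊕ n) (m ⊕ n) R}

theorem fromBlocks_toBlocks₁₁_inv_mul_self (hS : IsUnit S.toBlocks₁₁.det) :
    fromBlocks S.toBlocks₁₁⁻¹ 0 0 0 * S = fromBlocks 1 (S.toBlocks₁₁⁻¹ * S.toBlocks₁₂) 0 0 := by
  conv_lhs => rw [← S.fromBlocks_toBlocks]
  simp [fromBlocks_multiply, nonsing_inv_mul _ hS]

theorem fromBlocks_toBlocks₁₁_inv_mul_self_mul (hS : IsUnit S.toBlocks₁₁.det) :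
    fromBlocks S.toBlocks₁₁⁻¹ 0 0 0 * S * fromBlocks S.toBlocks₁₁⁻¹ 0 0 0 =
      fromBlocks S.toBlocks₁₁⁻¹ 0 0 0 := by
  simp [fromBlocks_toBlocks₁₁_inv_mul_self hS, fromBlocks_multiply]

theorem trace_fromBlocks_toBlocks₁₁_inv_mul_self (hS : IsUnit S.toBlocks₁₁.det) :
    (fromBlocks S.toBlocks₁₁⁻¹ 0 0 0 * S).trace = (Fintype.card m : R) := by
  simp [fromBlocks_toBlocks₁₁_inv_mul_self hS, trace_fromBlocks]

end Matrix

theorem stmt14_general (J K : ℕ)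
    -- `Σ`, a real symmetric positive definite `p × p` matrix, `p = J + K`, with the
    -- rows/columns partitioned into the first `J` and the last `K` indices
    (Sig : Matrix (Fin J ⊕ Fin K) (Fin J ⊕ Fin K) ℝ) (hSig : Sig.PosDef)
    -- the positive semidefinite square root of `Σ`
    (sqrtSig : Matrix (Fin J ⊕ Fin K) (Fin J ⊕ Fin K) ℝ)
    (hsqrt : sqrtSig = hSig.posSemidef.sqrt)
    -- `M`: the block matrix with top-left block `Σ₁₁⁻¹` and all other blocks zero
    (M : Matrix (Fin J ⊕ Fin K) (Fin J ⊕ Fin K) ℝ)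
    (hM : M = fromBlocks (Sig.toBlocks₁₁)⁻¹ 0 0 0)
    (A : Matrix (Fin J ⊕ Fin K) (Fin J ⊕ Fin K) ℝ)
    (hA : A = 1 - sqrtSig * M * sqrtSig) :
    Aᵀ = A ∧ A * A = A ∧ A.trace = (K : ℝ) := by
  have h11 : Sig.toBlocks₁₁.PosDef := hSig.submatrix Sum.inl_injective
  have hdet : IsUnit Sig.toBlocks₁₁.det := h11.det_pos.ne'.isUnit
  have hsq : sqrtSig * sqrtSig = Sig := hsqrt ▸ hSig.posSemidef.sqrt_mul_self
  have hsqrt_symm : sqrtSigᵀ = sqrtSig :=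
    hsqrt ▸ (isHermitian_iff_isSymm.mp hSig.posSemidef.isHermitian_sqrt).eq
  have hM_symm : Mᵀ = M := by
    rw [hM, fromBlocks_transpose, transpose_nonsing_inv, (isHermitian_iff_isSymm.mp h11.1).eq]
    simp
  refine ⟨?_, ?_, ?_⟩
  · rw [hA, transpose_sub, transpose_one, transpose_mul, transpose_mul, hsqrt_symm, hM_symm,
      Matrix.mul_assoc]
  · have hMSM : M * (sqrtSig * sqrtSig) * M = M := by
      rw [hsq, hM]; exact fromBlocks_toBlocks₁₁_inv_mul_self_mul hdet
    exact hA ▸ (isIdempotentElem_mul_mul_of_mul_mul_eq_self hMSM).one_sub.eq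
  · rw [hA, trace_sub, trace_one, trace_mul_cycle, hsq, trace_mul_comm, hM,
      trace_fromBlocks_toBlocks₁₁_inv_mul_self hdet]
    simp

theorem stmt14 (J K : ℕ) (hJ : 0 < J) (hK : 0 < K)
    -- `Σ`, a real symmetric positive definite `p × p` matrix, `p = J + K`, with the
    -- rows/columns partitioned into the first `J` and the last `K` indices
    (Sig : Matrix (Fin J ⊕ Fin K) (Fin J ⊕ Fin K) ℝ) (hSig : Sig.PosDef)
    -- the positive semidefinite square root of `Σ`
    (sqrtSig : Matrix (Fin J ⊕ Fin K) (Fin J ⊕ Fin K) ℝ)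
    (hsqrt : sqrtSig = hSig.posSemidef.sqrt)
    -- `M`: the block matrix with top-left block `Σ₁₁⁻¹` and all other blocks zero
    (M : Matrix (Fin J ⊕ Fin K) (Fin J ⊕ Fin K) ℝ)
    (hM : M = fromBlocks (Sig.toBlocks₁₁)⁻¹ 0 0 0)
    (A : Matrix (Fin J ⊕ Fin K) (Fin J ⊕ Fin K) ℝ)
    (hA : A = 1 - sqrtSig * M * sqrtSig) :
    Aᵀ = A ∧ A * A = A ∧ A.trace = (K : ℝ) :=
  stmt14_general J K Sig hSig sqrtSig hsqrt M hM A hA
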